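/- Let n ≥ 1 and let L : ℤ × ℝⁿ × ℝⁿ → ℝ, written L(k, y₀, y₁), be continuously differentiable in (y₀,y₁) for each k. Let X : ℤ × ℝⁿ → ℝⁿ satisfy, for every k ∈ ℤ and all y₀, y₁ ∈ ℝⁿ: ∇_{y₀}L(k, y₀, y₁)·X(k, y₀) + ∇_{y₁}L(k, y₀, y₁)·X(k+1, y₁) = 0. Then every sequence x : ℤ → ℝⁿ satisfying the discrete Euler–Lagrange equation ∇_{y₀}L(k+1, x(k+1), x(k+2)) + ∇_{y₁}L(k, x(k), x(k+1)) = 0 for all k ∈ ℤ also satisfies: the function k ↦ ∇_{y₀}L(k, x(k), x(k+1))·X(k, x(k)) is constant on ℤ. -/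

import Mathlib

/-!
The symmetry condition at `(x k, x (k+1))` and the Euler–Lagrange equation at `k`, tested against
`X (k+1) (x (k+1))`, share the term `∇_{y₁}L(k, x k, x (k+1)) · X (k+1) (x (k+1))`; subtracting them
shows that the charge `∇_{y₀}L(k, x k, x (k+1)) · X (k, x k)` takes the same value at `k` and `k + 1`,
so it is `1`-periodic on `ℤ`, hence constant.
-/

section DiscreteNoether

variable {E : Type*} [NormedAddCommGroup E] [NormedSpace ℝ E]

noncomputable def noetherCharge (L : ℤ → E → E → ℝ) (X : ℤ → E → E) (x : ℤ → E) (k : ℤ) : ℝ :=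
  fderiv ℝ (fun y => L k y (x (k+1))) (x k) (X k (x k))

theorem noetherCharge_periodic (L : ℤ → E → E → ℝ) (X : ℤ → E → E) (x : ℤ → E)
    (hsym : ∀ (k : ℤ) (y₀ y₁ : E),
      fderiv ℝ (fun y => L k y y₁) y₀ (X k y₀)
        + fderiv ℝ (fun y => L k y₀ y) y₁ (X (k+1) y₁) = 0)
    (hEL : ∀ (k : ℤ) (w : E),
      fderiv ℝ (fun y => L (k+1) y (x (k+2))) (x (k+1)) w
        + fderiv ℝ (fun y => L k (x k) y) (x (k+1)) w = 0) :
    Function.Periodic (noetherCharge L X x) 1 := by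
  intro k
  have hsym_k := hsym k (x k) (x (k+1))
  have hEL_k := hEL k (X (k+1) (x (k+1)))
  rw [noetherCharge, noetherCharge, show k + 1 + 1 = k + 2 by ring]
  linarith

end DiscreteNoether

theorem stmt_7_general (n : ℕ)
    (L : ℤ → (Fin n → ℝ) → (Fin n → ℝ) → ℝ)
    (X : ℤ → (Fin n → ℝ) → (Fin n → ℝ))
    (hsym : ∀ (k : ℤ) (y₀ y₁ : Fin n → ℝ),
      fderiv ℝ (fun y => L k y y₁) y₀ (X k y₀)
        + fderiv ℝ (fun y => L k y₀ y) y₁ (X (k+1) y₁) = 0)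
    (x : ℤ → Fin n → ℝ)
    (hEL : ∀ (k : ℤ) (w : Fin n → ℝ),
      fderiv ℝ (fun y => L (k+1) y (x (k+2))) (x (k+1)) w
        + fderiv ℝ (fun y => L k (x k) y) (x (k+1)) w = 0) :
    ∃ c : ℝ, ∀ k : ℤ,
      fderiv ℝ (fun y => L k y (x (k+1))) (x k) (X k (x k)) = c :=
  ⟨noetherCharge L X x 0, fun k => by
    have := (noetherCharge_periodic L X x hsym hEL).int_mul_eq k
    rwa [Int.cast_id, mul_one] at this⟩

/-- Discrete-time Noether theorem, first-order case (m = 1). -/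
theorem stmt_7 (n : ℕ) (hn : 1 ≤ n)
    (L : ℤ → (Fin n → ℝ) → (Fin n → ℝ) → ℝ)
    (hL : ∀ k : ℤ, ContDiff ℝ 1 (fun p : (Fin n → ℝ) × (Fin n → ℝ) => L k p.1 p.2))
    (X : ℤ → (Fin n → ℝ) → (Fin n → ℝ))
    (hsym : ∀ (k : ℤ) (y₀ y₁ : Fin n → ℝ),
      fderiv ℝ (fun y => L k y y₁) y₀ (X k y₀)
        + fderiv ℝ (fun y => L k y₀ y) y₁ (X (k+1) y₁) = 0)
    (x : ℤ → Fin n → ℝ)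
    (hEL : ∀ (k : ℤ) (w : Fin n → ℝ),
      fderiv ℝ (fun y => L (k+1) y (x (k+2))) (x (k+1)) w
        + fderiv ℝ (fun y => L k (x k) y) (x (k+1)) w = 0) :
    ∃ c : ℝ, ∀ k : ℤ,
      fderiv ℝ (fun y => L k y (x (k+1))) (x k) (X k (x k)) = c :=
  stmt_7_general n L X hsym x hEL
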